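/- arXiv:math/0510443 — 3 statements merged into one kernel-verified Lean document; each statement's English description precedes it below -/
import Mathlib

section
/- Let A be an associative ℂ-algebra (possibly graded with all elements of even degree, so no signs occur). Then the space of S_m-coinvariants S^m A = (A^{⊗m})_{S_m}, equipped with the product (ā₁⊗...⊗a_m)·(b̄₁⊗...⊗b_m) = (1/m!) Σ_{σ∈S_m} (a₁b_{σ⁻¹(1)}) ⊗ ... ⊗ (a_m b_{σ⁻¹(m)}) (bar denoting the coinvariant class), is an associative algebra. -/
open scoped TensorProduct BigOperators
open PiTensorProduct

/-- The `m`-fold tensor power `A^{⊗m}` over `ℂ`. -/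
abbrev TPow (A : Type) [AddCommGroup A] [Module ℂ A] (m : ℕ) : Type :=
  PiTensorProduct ℂ (fun _ : Fin m => A)

/-- The subspace of `A^{⊗m}` spanned by the elements `y - σ·y` for permutations `σ`,
so that the quotient is the space of `S_m`-coinvariants. -/
def symRel (A : Type) [AddCommGroup A] [Module ℂ A] (m : ℕ) : Submodule ℂ (TPow A m) :=
  Submodule.span ℂ
    {x | ∃ (y : TPow A m) (σ : Equiv.Perm (Fin m)),
      x = y - PiTensorProduct.reindex ℂ (fun _ => A) σ y}

/-- The symmetric power `S^m A = (A^{⊗m})_{S_m}` (coinvariants). -/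
abbrev SymPow (A : Type) [AddCommGroup A] [Module ℂ A] (m : ℕ) : Type :=
  TPow A m ⧸ symRel A m

/-- The class in `S^m A` of a pure tensor `a₁ ⊗ ... ⊗ a_m`. -/
noncomputable def symMk (A : Type) [AddCommGroup A] [Module ℂ A] (m : ℕ) (a : Fin m → A) : SymPow A m :=
  (symRel A m).mkQ (tprod ℂ a)

noncomputable example (A : Type) [Ring A] [Algebra ℂ A] (m : ℕ) (a b : Fin m → A) : SymPow A m :=
  (m.factorial : ℂ)⁻¹ • ∑ σ : Equiv.Perm (Fin m), symMk A m (fun i => a i * b (σ⁻¹ i))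

/-!
**Statement 4.** For an associative ℂ-algebra `A` (all elements of even degree, so no
signs), the space of `S_m`-coinvariants `S^m A = (A^{⊗m})_{S_m}`, equipped with the
product `(ā₁⊗...⊗a_m)·(b̄₁⊗...⊗b_m) = (1/m!) Σ_σ (a₁ b_{σ⁻¹(1)}) ⊗ ... ⊗ (a_m b_{σ⁻¹(m)})`,
is an associative algebra: there is a (necessarily unique) ℂ-bilinear product on the
coinvariants satisfying the displayed formula on classes of pure tensors, and it is
associative.
-/

namespace SymPowAux

variable (A : Type) [Ring A] [Algebra ℂ A] (m : ℕ)

lemma rdx_mul (σ : Equiv.Perm (Fin m)) (x y : TPow A m) :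
    PiTensorProduct.reindex ℂ (fun _ => A) σ (x * y) =
      PiTensorProduct.reindex ℂ (fun _ => A) σ x *
        PiTensorProduct.reindex ℂ (fun _ => A) σ y := by
  induction x using PiTensorProduct.induction_on with
  | smul_tprod r a =>
    induction y using PiTensorProduct.induction_on with
    | smul_tprod s b =>
      simp only [smul_mul_assoc, mul_smul_comm, map_smul, tprod_mul_tprod, reindex_tprod]
      congr 1
    | add u v hu hv => simp only [mul_add, map_add, hu, hv]
  | add u v hu hv => simp only [add_mul, map_add, hu, hv]

lemma rdx_rdx (σ τ : Equiv.Perm (Fin m)) (y : TPow A m) :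
    PiTensorProduct.reindex ℂ (fun _ => A) σ
        (PiTensorProduct.reindex ℂ (fun _ => A) τ y) =
      PiTensorProduct.reindex ℂ (fun _ => A) (σ * τ) y := by
  exact PiTensorProduct.reindex_reindex (s := fun _ : Fin m => A) τ σ y

lemma mkQ_rdx (σ : Equiv.Perm (Fin m)) (y : TPow A m) :
    (symRel A m).mkQ (PiTensorProduct.reindex ℂ (fun _ => A) σ y) = (symRel A m).mkQ y := by
  rw [Submodule.mkQ_apply, Submodule.mkQ_apply, eq_comm, Submodule.Quotient.eq]
  exact Submodule.subset_span ⟨y, σ, rfl⟩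

noncomputable def mulTT : TPow A m →ₗ[ℂ] TPow A m →ₗ[ℂ] SymPow A m :=
  LinearMap.mk₂ ℂ
    (fun x y => (m.factorial : ℂ)⁻¹ •
      ∑ σ : Equiv.Perm (Fin m),
        (symRel A m).mkQ (x * PiTensorProduct.reindex ℂ (fun _ => A) σ y))
    (by intro x x' y
        simp only [add_mul, map_add, Finset.sum_add_distrib, smul_add])
    (by intro c x y
        simp only [smul_mul_assoc, map_smul, ← Finset.smul_sum, smul_comm c])
    (by intro x y y'
        simp only [map_add, mul_add, Finset.sum_add_distrib, smul_add])
    (by intro c x y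
        simp only [map_smul, mul_smul_comm, ← Finset.smul_sum, smul_comm c])

lemma mulTT_apply (x y : TPow A m) :
    mulTT A m x y = (m.factorial : ℂ)⁻¹ •
      ∑ σ : Equiv.Perm (Fin m),
        (symRel A m).mkQ (x * PiTensorProduct.reindex ℂ (fun _ => A) σ y) := rfl

lemma mulTT_rdx_left (σ : Equiv.Perm (Fin m)) (x : TPow A m) :
    mulTT A m (PiTensorProduct.reindex ℂ (fun _ => A) σ x) = mulTT A m x := by
  refine LinearMap.ext fun y => ?_
  simp only [mulTT_apply]
  congr 1
  refine Fintype.sum_equiv (Equiv.mulLeft σ⁻¹)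
    (fun τ => (symRel A m).mkQ (PiTensorProduct.reindex ℂ (fun _ => A) σ x *
      PiTensorProduct.reindex ℂ (fun _ => A) τ y))
    (fun τ => (symRel A m).mkQ (x * PiTensorProduct.reindex ℂ (fun _ => A) τ y))
    (fun τ => ?_)
  have h1 : PiTensorProduct.reindex ℂ (fun _ => A) σ
      (PiTensorProduct.reindex ℂ (fun _ => A) (σ⁻¹ * τ) y) =
      PiTensorProduct.reindex ℂ (fun _ => A) τ y := by
    rw [rdx_rdx, mul_inv_cancel_left]
  beta_reduce
  rw [Equiv.coe_mulLeft, ← h1, ← rdx_mul, mkQ_rdx]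

lemma mulTT_rdx_right (σ : Equiv.Perm (Fin m)) (x y : TPow A m) :
    mulTT A m x (PiTensorProduct.reindex ℂ (fun _ => A) σ y) = mulTT A m x y := by
  simp only [mulTT_apply]
  congr 1
  refine Fintype.sum_equiv (Equiv.mulRight σ)
    (fun τ => (symRel A m).mkQ (x * PiTensorProduct.reindex ℂ (fun _ => A) τ
      (PiTensorProduct.reindex ℂ (fun _ => A) σ y)))
    (fun τ => (symRel A m).mkQ (x * PiTensorProduct.reindex ℂ (fun _ => A) τ y))
    (fun τ => ?_)
  beta_reduce
  rw [Equiv.coe_mulRight, rdx_rdx]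

lemma hle1 : symRel A m ≤ LinearMap.ker (mulTT A m) := by
  refine Submodule.span_le.mpr ?_
  rintro _ ⟨y, σ, rfl⟩
  rw [SetLike.mem_coe, LinearMap.mem_ker, map_sub, sub_eq_zero, mulTT_rdx_left]

noncomputable def mul1 : SymPow A m →ₗ[ℂ] TPow A m →ₗ[ℂ] SymPow A m :=
  Submodule.liftQ (symRel A m) (mulTT A m) (hle1 A m)

lemma hle2 : symRel A m ≤ LinearMap.ker (mul1 A m).flip := by
  refine Submodule.span_le.mpr ?_
  rintro _ ⟨y, σ, rfl⟩
  rw [SetLike.mem_coe, LinearMap.mem_ker]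
  apply Submodule.linearMap_qext
  refine LinearMap.ext fun u => ?_
  simp only [LinearMap.comp_apply, LinearMap.zero_comp, LinearMap.zero_apply,
    Submodule.mkQ_apply, map_sub, LinearMap.sub_apply, LinearMap.flip_apply, mul1,
    Submodule.liftQ_apply, mulTT_rdx_right, sub_self]

noncomputable def mul : SymPow A m →ₗ[ℂ] SymPow A m →ₗ[ℂ] SymPow A m :=
  (Submodule.liftQ (symRel A m) (mul1 A m).flip (hle2 A m)).flip

lemma mul_mk (x y : TPow A m) :
    mul A m ((symRel A m).mkQ x) ((symRel A m).mkQ y) = mulTT A m x y := rfl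

end SymPowAux

namespace SymPowAux

variable (A : Type) [Ring A] [Algebra ℂ A] (m : ℕ)

lemma mul_assoc' (x y z : SymPow A m) :
    mul A m (mul A m x y) z = mul A m x (mul A m y z) := by
  obtain ⟨u, rfl⟩ := Submodule.mkQ_surjective _ x
  obtain ⟨v, rfl⟩ := Submodule.mkQ_surjective _ y
  obtain ⟨w, rfl⟩ := Submodule.mkQ_surjective _ z
  rw [mul_mk, mul_mk, mulTT_apply A m u v, mulTT_apply A m v w]
  simp only [map_smul, map_sum, LinearMap.smul_apply, LinearMap.sum_apply, mul_mk, mulTT_apply]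
  simp only [← Finset.smul_sum]
  congr 1
  congr 1
  conv_rhs => rw [Finset.sum_comm]
  refine Finset.sum_congr rfl fun σ _ => ?_
  have hterm : ∀ τ : Equiv.Perm (Fin m),
      (symRel A m).mkQ (u * PiTensorProduct.reindex ℂ (fun _ => A) σ
        (v * PiTensorProduct.reindex ℂ (fun _ => A) τ w)) =
      (symRel A m).mkQ ((u * PiTensorProduct.reindex ℂ (fun _ => A) σ v) *
        PiTensorProduct.reindex ℂ (fun _ => A) (σ * τ) w) := fun τ => by
    rw [rdx_mul, rdx_rdx, mul_assoc]
  rw [Finset.sum_congr rfl fun τ _ => hterm τ]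
  exact (Equiv.sum_comp (Equiv.mulLeft σ) fun τ =>
    (symRel A m).mkQ ((u * PiTensorProduct.reindex ℂ (fun _ => A) σ v) *
      PiTensorProduct.reindex ℂ (fun _ => A) τ w)).symm

lemma mul_symMk (a b : Fin m → A) :
    mul A m (symMk A m a) (symMk A m b) =
      (m.factorial : ℂ)⁻¹ •
        ∑ σ : Equiv.Perm (Fin m), symMk A m (fun i => a i * b (σ⁻¹ i)) := by
  rw [symMk, symMk, mul_mk, mulTT_apply]
  congr 1
  refine Finset.sum_congr rfl fun σ _ => ?_
  rw [symMk]
  congr 1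
  rw [PiTensorProduct.reindex_tprod, tprod_mul_tprod]
  rfl

end SymPowAux

theorem sympow_is_associative_algebra (A : Type) [Ring A] [Algebra ℂ A] (m : ℕ) :
    ∃ mul : SymPow A m →ₗ[ℂ] SymPow A m →ₗ[ℂ] SymPow A m,
      (∀ a b : Fin m → A,
        mul (symMk A m a) (symMk A m b) =
          (m.factorial : ℂ)⁻¹ •
            ∑ σ : Equiv.Perm (Fin m), symMk A m (fun i => a i * b (σ⁻¹ i))) ∧
      (∀ x y z : SymPow A m, mul (mul x y) z = mul x (mul y z)) :=
  ⟨SymPowAux.mul A m, SymPowAux.mul_symMk A m, SymPowAux.mul_assoc' A m⟩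
end

section
/- Let A be an associative ℂ-algebra and V an A-module (all in even degree so signs are trivial). Then S^m V = (V^{⊗m})_{S_m} is a module over the symmetric power algebra S^m A via (ā₁⊗...⊗a_m)·(v̄₁⊗...⊗v_m) = (1/m!) Σ_{σ∈S_m} a₁(v_{σ⁻¹(1)}) ⊗ ... ⊗ a_m(v_{σ⁻¹(m)}). -/
open scoped TensorProduct BigOperators
open PiTensorProduct

noncomputable example (A : Type) [Ring A] [Algebra ℂ A] (m : ℕ) (a b : Fin m → A) : SymPow A m :=
  (m.factorial : ℂ)⁻¹ • ∑ σ : Equiv.Perm (Fin m), symMk A m (fun i => a i * b (σ⁻¹ i))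

/-!
**Statement 5.** Let `A` be an associative ℂ-algebra and `V` an `A`-module (all in even
degree).  Then `S^m V = (V^{⊗m})_{S_m}` is a module over the symmetric power algebra
`S^m A` via `(ā₁⊗...⊗a_m)·(v̄₁⊗...⊗v_m) = (1/m!) Σ_σ a₁(v_{σ⁻¹(1)}) ⊗ ... ⊗ a_m(v_{σ⁻¹(m)})`:
there is a ℂ-bilinear action satisfying this formula on classes of pure tensors, and it
satisfies the module axiom `ρ(AB) = ρ(A)ρ(B)` with respect to the symmetrized product
on `S^m A`.
-/

section Generic

variable {A V : Type} [AddCommGroup A] [Module ℂ A] [AddCommGroup V] [Module ℂ V]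
variable {m : ℕ} (S : A →ₗ[ℂ] V →ₗ[ℂ] V)

/-- `mkQ` kills reindexing. -/
lemma symMkQ_reindex (σ : Equiv.Perm (Fin m)) (w : TPow V m) :
    (symRel V m).mkQ (PiTensorProduct.reindex ℂ (fun _ => V) σ w) = (symRel V m).mkQ w := by
  rw [eq_comm, ← sub_eq_zero, ← map_sub, Submodule.mkQ_apply, Submodule.Quotient.mk_eq_zero]
  exact Submodule.subset_span ⟨w, σ, rfl⟩

noncomputable def rawTerm (σ : Equiv.Perm (Fin m)) :
    TPow A m →ₗ[ℂ] TPow V m →ₗ[ℂ] SymPow V m :=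
  ((PiTensorProduct.map₂ (fun _ : Fin m => S)).compl₂
    (PiTensorProduct.reindex ℂ (fun _ => V) σ).toLinearMap).compr₂ (symRel V m).mkQ

lemma rawTerm_apply (σ : Equiv.Perm (Fin m)) (x : TPow A m) (y : TPow V m) :
    rawTerm S σ x y = (symRel V m).mkQ
      (PiTensorProduct.map₂ (fun _ : Fin m => S) x (PiTensorProduct.reindex ℂ (fun _ => V) σ y)) := rfl

noncomputable def rawF : TPow A m →ₗ[ℂ] TPow V m →ₗ[ℂ] SymPow V m :=
  (m.factorial : ℂ)⁻¹ • ∑ σ : Equiv.Perm (Fin m), rawTerm S σ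

lemma rawF_apply (x : TPow A m) (y : TPow V m) :
    rawF S x y = (m.factorial : ℂ)⁻¹ • ∑ σ : Equiv.Perm (Fin m), rawTerm S σ x y := by
  simp [rawF, LinearMap.sum_apply]

lemma map₂_reindex (σ : Equiv.Perm (Fin m)) (x : TPow A m) (w : TPow V m) :
    PiTensorProduct.map₂ (fun _ : Fin m => S)
        (PiTensorProduct.reindex ℂ (fun _ => A) σ x)
        (PiTensorProduct.reindex ℂ (fun _ => V) σ w)
      = PiTensorProduct.reindex ℂ (fun _ => V) σ
        (PiTensorProduct.map₂ (fun _ : Fin m => S) x w) := by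
  induction x using PiTensorProduct.induction_on with
  | smul_tprod c a =>
    induction w using PiTensorProduct.induction_on with
    | smul_tprod d v =>
      simp only [map_smul, LinearMap.smul_apply, LinearMap.map_smul]
      congr 1
      congr 1
      simp [PiTensorProduct.reindex_tprod, PiTensorProduct.map₂_tprod_tprod, Function.comp]
    | add w₁ w₂ h₁ h₂ =>
      simp only [map_add, h₁, h₂]
  | add x₁ x₂ h₁ h₂ =>
    simp only [map_add, LinearMap.add_apply, h₁, h₂]

lemma rawF_reindex_right (x : TPow A m) (σ : Equiv.Perm (Fin m)) (y : TPow V m) :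
    rawF S x (PiTensorProduct.reindex ℂ (fun _ => V) σ y) = rawF S x y := by
  rw [rawF_apply, rawF_apply]
  congr 1
  rw [← Equiv.sum_comp (Equiv.mulRight σ) (fun τ => rawTerm S τ x y)]
  refine Finset.sum_congr rfl fun τ _ => ?_
  rw [rawTerm_apply, rawTerm_apply]
  have h := PiTensorProduct.reindex_reindex (R := ℂ) (s := fun _ : Fin m => V) σ τ y
  rw [h]
  rfl

lemma rawF_reindex_left (σ : Equiv.Perm (Fin m)) (x : TPow A m) (y : TPow V m) :
    rawF S (PiTensorProduct.reindex ℂ (fun _ => A) σ x) y = rawF S x y := by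
  rw [rawF_apply, rawF_apply]
  congr 1
  rw [← Equiv.sum_comp (Equiv.mulLeft σ⁻¹) (fun τ => rawTerm S τ x y)]
  refine Finset.sum_congr rfl fun τ _ => ?_
  rw [rawTerm_apply, rawTerm_apply]
  have h1 : PiTensorProduct.reindex ℂ (fun _ : Fin m => V) τ y
      = PiTensorProduct.reindex ℂ (fun _ => V) σ
        (PiTensorProduct.reindex ℂ (fun _ => V) (τ.trans σ⁻¹) y) := by
    have h := PiTensorProduct.reindex_reindex (R := ℂ) (s := fun _ : Fin m => V)
      (τ.trans σ⁻¹) σ y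
    have h2 : (τ.trans σ⁻¹).trans σ = τ := by ext i; simp
    rw [h, h2]
  rw [h1, map₂_reindex, symMkQ_reindex]
  rfl

/-- first descent: kill `symRel V` in the right slot. -/
noncomputable def act₁ : TPow A m →ₗ[ℂ] SymPow V m →ₗ[ℂ] SymPow V m :=
  ((symRel V m).liftQ (rawF S).flip (by
    refine Submodule.span_le.mpr ?_
    rintro _ ⟨y, σ, rfl⟩
    simp only [SetLike.mem_coe, LinearMap.mem_ker, map_sub]
    ext x
    simp only [LinearMap.compMultilinearMap_apply, LinearMap.sub_apply,
      LinearMap.zero_apply, LinearMap.flip_apply]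
    rw [rawF_reindex_right S (tprod ℂ x) σ y, sub_self])).flip

lemma act₁_apply (x : TPow A m) (y : TPow V m) :
    act₁ S x ((symRel V m).mkQ y) = rawF S x y := rfl

/-- second descent: kill `symRel A` in the left slot. -/
noncomputable def act : SymPow A m →ₗ[ℂ] SymPow V m →ₗ[ℂ] SymPow V m :=
  (symRel A m).liftQ (act₁ S) (by
    refine Submodule.span_le.mpr ?_
    rintro _ ⟨x, σ, rfl⟩
    simp only [SetLike.mem_coe, LinearMap.mem_ker, map_sub]
    rw [sub_eq_zero]
    refine Submodule.linearMap_qext _ ?_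
    refine LinearMap.ext fun y => ?_
    simp only [LinearMap.comp_apply, Submodule.mkQ_apply]
    show rawF S x y = rawF S (PiTensorProduct.reindex ℂ (fun _ => A) σ x) y
    rw [rawF_reindex_left])

lemma act_mk (x : TPow A m) (y : TPow V m) :
    act S ((symRel A m).mkQ x) ((symRel V m).mkQ y) = rawF S x y := rfl

lemma act_symMk (a : Fin m → A) (v : Fin m → V) :
    act S (symMk A m a) (symMk V m v) =
      (m.factorial : ℂ)⁻¹ •
        ∑ σ : Equiv.Perm (Fin m), (symRel V m).mkQ (tprod ℂ (fun i => S (a i) (v (σ⁻¹ i)))) := by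
  rw [symMk, symMk, act_mk, rawF_apply]
  congr 1
  refine Finset.sum_congr rfl fun σ _ => ?_
  rw [rawTerm_apply, PiTensorProduct.reindex_tprod, PiTensorProduct.map₂_tprod_tprod]
  rfl

variable (T : A →ₗ[ℂ] A →ₗ[ℂ] A)

lemma act_act_pure (hST : ∀ a b v, S (T a b) v = S a (S b v))
    (a b : Fin m → A) (v : Fin m → V) :
    act S (act T ((symRel A m).mkQ (tprod ℂ a)) ((symRel A m).mkQ (tprod ℂ b)))
        ((symRel V m).mkQ (tprod ℂ v))
      = act S ((symRel A m).mkQ (tprod ℂ a))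
          (act S ((symRel A m).mkQ (tprod ℂ b)) ((symRel V m).mkQ (tprod ℂ v))) := by
  have hT := act_symMk T a b
  simp only [symMk] at hT
  rw [hT]
  have hS := act_symMk S b v
  simp only [symMk] at hS
  rw [hS]
  simp only [map_smul, map_sum, LinearMap.smul_apply, LinearMap.sum_apply]
  have key : ∀ (c : Fin m → A) (w : Fin m → V),
      act S ((symRel A m).mkQ (tprod ℂ c)) ((symRel V m).mkQ (tprod ℂ w))
        = (m.factorial : ℂ)⁻¹ • ∑ σ : Equiv.Perm (Fin m),
            (symRel V m).mkQ (tprod ℂ (fun i => S (c i) (w (σ⁻¹ i)))) := by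
    intro c w
    have := act_symMk S c w
    simpa only [symMk] using this
  simp only [key, hST]
  rw [← Finset.smul_sum, ← Finset.smul_sum]
  congr 1
  congr 1
  conv_rhs => rw [Finset.sum_comm]
  refine Finset.sum_congr rfl fun σ _ => ?_
  rw [← Equiv.sum_comp (Equiv.mulLeft σ)
    (fun τ : Equiv.Perm (Fin m) => (symRel V m).mkQ
      (tprod ℂ (fun i => S (a i) (S (b (σ⁻¹ i)) (v (τ⁻¹ i))))))]
  refine Finset.sum_congr rfl fun τ _ => ?_
  congr 1

lemma act_assoc (hST : ∀ a b v, S (T a b) v = S a (S b v))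
    (x y : SymPow A m) (vv : SymPow V m) :
    act S (act T x y) vv = act S x (act S y vv) := by
  obtain ⟨x, rfl⟩ := (symRel A m).mkQ_surjective x
  obtain ⟨y, rfl⟩ := (symRel A m).mkQ_surjective y
  obtain ⟨w, rfl⟩ := (symRel V m).mkQ_surjective vv
  induction x using PiTensorProduct.induction_on with
  | smul_tprod c a =>
    induction y using PiTensorProduct.induction_on with
    | smul_tprod d b =>
      induction w using PiTensorProduct.induction_on with
      | smul_tprod e v =>
        simp only [map_smul, LinearMap.smul_apply, LinearMap.map_smul,
          act_act_pure S T hST]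
      | add w₁ w₂ h₁ h₂ =>
        simp only [map_add, LinearMap.map_add, h₁, h₂]
    | add y₁ y₂ h₁ h₂ =>
      simp only [map_add, LinearMap.add_apply, LinearMap.map_add, h₁, h₂]
  | add x₁ x₂ h₁ h₂ =>
    simp only [map_add, LinearMap.add_apply, LinearMap.map_add, h₁, h₂]

end Generic

theorem sympow_module (A : Type) [Ring A] [Algebra ℂ A]
    (V : Type) [AddCommGroup V] [Module ℂ V] [Module A V]
    [IsScalarTower ℂ A V] [SMulCommClass ℂ A V] (m : ℕ) :
    ∃ mul : SymPow A m →ₗ[ℂ] SymPow A m →ₗ[ℂ] SymPow A m,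
      (∀ a b : Fin m → A,
        mul (symMk A m a) (symMk A m b) =
          (m.factorial : ℂ)⁻¹ •
            ∑ σ : Equiv.Perm (Fin m), symMk A m (fun i => a i * b (σ⁻¹ i))) ∧
      ∃ act : SymPow A m →ₗ[ℂ] SymPow V m →ₗ[ℂ] SymPow V m,
        (∀ (a : Fin m → A) (v : Fin m → V),
          act (symMk A m a) (symMk V m v) =
            (m.factorial : ℂ)⁻¹ •
              ∑ σ : Equiv.Perm (Fin m), symMk V m (fun i => a i • v (σ⁻¹ i))) ∧
        (∀ (x y : SymPow A m) (v : SymPow V m),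
          act (mul x y) v = act x (act y v)) := by
  classical
  let T : A →ₗ[ℂ] A →ₗ[ℂ] A := LinearMap.mul ℂ A
  let S : A →ₗ[ℂ] V →ₗ[ℂ] V :=
    LinearMap.mk₂ ℂ (· • ·) (fun a a' v => add_smul a a' v)
      (fun c a v => smul_assoc c a v) (fun a v v' => smul_add a v v')
      (fun c a v => (smul_comm c a v).symm)
  have hST : ∀ a b v, S (T a b) v = S a (S b v) := fun a b v => mul_smul a b v
  refine ⟨act T, fun a b => ?_, act S, fun a v => ?_, fun x y v => act_assoc S T hST x y v⟩
  · simpa only [symMk, T, LinearMap.mul_apply'] using act_symMk T a b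
  · simpa only [symMk, S, LinearMap.mk₂_apply] using act_symMk S a v
end

section
/- For A = End(V) with V a finite-dimensional complex vector space, the natural map S^m(End(V)) → End(S^m V) defined by the symmetrized action (ā₁⊗...⊗a_m)(v̄₁⊗...⊗v_m) = (1/m!) Σ_{σ∈S_m} a₁(v_{σ⁻¹(1)})⊗...⊗a_m(v_{σ⁻¹(m)}) is an algebra homomorphism. -/
open scoped TensorProduct BigOperators
open PiTensorProduct

noncomputable example (A : Type) [Ring A] [Algebra ℂ A] (m : ℕ) (a b : Fin m → A) : SymPow A m :=
  (m.factorial : ℂ)⁻¹ • ∑ σ : Equiv.Perm (Fin m), symMk A m (fun i => a i * b (σ⁻¹ i))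

/-!
**Statement 14.** For `A = End(V)` with `V` a finite-dimensional complex vector space,
the natural map `S^m(End V) → End(S^m V)` defined by the symmetrized action
`(ā₁⊗...⊗a_m)(v̄₁⊗...⊗v_m) = (1/m!) Σ_σ a₁(v_{σ⁻¹(1)}) ⊗ ... ⊗ a_m(v_{σ⁻¹(m)})`
is an algebra homomorphism (with respect to the symmetrized product on `S^m(End V)`
and composition in `End(S^m V)`).
-/

section Aux

variable (m : ℕ) {A W : Type} [AddCommGroup A] [Module ℂ A] [AddCommGroup W] [Module ℂ W]

noncomputable def appT (φ : A →ₗ[ℂ] W →ₗ[ℂ] W) : TPow A m →ₗ[ℂ] TPow W m →ₗ[ℂ] TPow W m :=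
  PiTensorProduct.map₂ (fun _ : Fin m => φ)

@[simp] lemma appT_tprod (φ : A →ₗ[ℂ] W →ₗ[ℂ] W) (a : Fin m → A) (w : Fin m → W) :
    appT m φ (tprod ℂ a) (tprod ℂ w) = tprod ℂ (fun i => φ (a i) (w i)) :=
  PiTensorProduct.map₂_tprod_tprod _ _ _

lemma mkQ_reindex (σ : Equiv.Perm (Fin m)) (w : TPow W m) :
    (symRel W m).mkQ (PiTensorProduct.reindex ℂ (fun _ => W) σ w) = (symRel W m).mkQ w := by
  symm
  rw [Submodule.mkQ_apply, Submodule.mkQ_apply, Submodule.Quotient.eq]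
  exact Submodule.subset_span ⟨w, σ, rfl⟩

lemma appT_reindex (φ : A →ₗ[ℂ] W →ₗ[ℂ] W) (σ : Equiv.Perm (Fin m)) (x : TPow A m)
    (w : TPow W m) :
    appT m φ (PiTensorProduct.reindex ℂ (fun _ => A) σ x) w =
      PiTensorProduct.reindex ℂ (fun _ => W) σ
        (appT m φ x (PiTensorProduct.reindex ℂ (fun _ => W) σ.symm w)) := by
  induction x using PiTensorProduct.induction_on with
  | smul_tprod r a =>
    induction w using PiTensorProduct.induction_on with
    | smul_tprod s w =>
      simp only [map_smul, LinearMap.smul_apply, reindex_tprod, appT_tprod,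
        Equiv.symm_symm]
      have h : ∀ i, w (σ ((Equiv.symm σ) i)) = w i := fun i => congrArg w (σ.apply_symm_apply i)
      simp only [h]
    | add u v hu hv =>
      simp only [map_add, hu, hv]
  | add u v hu hv =>
    simp only [map_add, LinearMap.add_apply, hu, hv]

lemma reindex_comp (e e' : Equiv.Perm (Fin m)) (w : TPow W m) :
    PiTensorProduct.reindex ℂ (fun _ => W) e' (PiTensorProduct.reindex ℂ (fun _ => W) e w) =
      PiTensorProduct.reindex ℂ (fun _ => W) (e.trans e') w := by
  induction w using PiTensorProduct.induction_on with
  | smul_tprod r w =>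
    simp only [map_smul, reindex_tprod]
    rfl
  | add u v hu hv =>
    simp only [map_add, hu, hv]

noncomputable def Bmap (φ : A →ₗ[ℂ] W →ₗ[ℂ] W) :
    TPow A m →ₗ[ℂ] TPow W m →ₗ[ℂ] SymPow W m :=
  (m.factorial : ℂ)⁻¹ • ∑ σ : Equiv.Perm (Fin m),
    ((appT m φ).compr₂ (symRel W m).mkQ).compl₂
      (PiTensorProduct.reindex ℂ (fun _ => W) σ).toLinearMap

lemma Bmap_apply (φ : A →ₗ[ℂ] W →ₗ[ℂ] W) (x : TPow A m) (w : TPow W m) :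
    Bmap m φ x w = (m.factorial : ℂ)⁻¹ • ∑ σ : Equiv.Perm (Fin m),
      (symRel W m).mkQ (appT m φ x (PiTensorProduct.reindex ℂ (fun _ => W) σ w)) := by
  simp [Bmap, LinearMap.sum_apply, LinearMap.compr₂_apply, LinearMap.compl₂_apply]

lemma Bmap_ker₂ (φ : A →ₗ[ℂ] W →ₗ[ℂ] W) (x : TPow A m) :
    symRel W m ≤ LinearMap.ker (Bmap m φ x) := by
  apply Submodule.span_le.mpr
  rintro _ ⟨w, τ, rfl⟩
  simp only [SetLike.mem_coe, LinearMap.mem_ker, map_sub, Bmap_apply]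
  rw [sub_eq_zero]
  congr 1
  refine Fintype.sum_equiv (Equiv.mulRight τ⁻¹) _ _ (fun σ => ?_)
  simp only [Equiv.coe_mulRight]
  rw [reindex_comp]
  have h : τ.trans (σ * τ⁻¹) = σ := by
    ext i
    simp [Equiv.Perm.mul_apply]
  rw [h]

noncomputable def B2 (φ : A →ₗ[ℂ] W →ₗ[ℂ] W) :
    TPow A m →ₗ[ℂ] SymPow W m →ₗ[ℂ] SymPow W m where
  toFun x := (symRel W m).liftQ (Bmap m φ x) (Bmap_ker₂ m φ x)
  map_add' x y := by
    apply Submodule.linearMap_qext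
    ext w
    simp [map_add]
  map_smul' c x := by
    apply Submodule.linearMap_qext
    ext w
    simp

lemma B2_mk (φ : A →ₗ[ℂ] W →ₗ[ℂ] W) (x : TPow A m) (w : TPow W m) :
    B2 m φ x ((symRel W m).mkQ w) = Bmap m φ x w := by
  simp [B2, Submodule.mkQ_apply, Submodule.liftQ_apply]

lemma B2_ker₁ (φ : A →ₗ[ℂ] W →ₗ[ℂ] W) : symRel A m ≤ LinearMap.ker (B2 m φ) := by
  apply Submodule.span_le.mpr
  rintro _ ⟨x, τ, rfl⟩
  simp only [SetLike.mem_coe, LinearMap.mem_ker, map_sub]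
  rw [sub_eq_zero]
  apply Submodule.linearMap_qext
  ext w
  simp only [LinearMap.compMultilinearMap_apply, LinearMap.comp_apply, B2_mk, Bmap_apply]
  congr 1
  refine Fintype.sum_equiv (Equiv.mulLeft τ) _ _ (fun σ => ?_)
  simp only [Equiv.coe_mulLeft]
  rw [appT_reindex, mkQ_reindex, reindex_comp]
  have h : (τ * σ).trans τ.symm = σ := by
    ext i
    simp [Equiv.Perm.mul_apply]
  rw [h]

noncomputable def opMap (φ : A →ₗ[ℂ] W →ₗ[ℂ] W) :
    SymPow A m →ₗ[ℂ] SymPow W m →ₗ[ℂ] SymPow W m :=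
  (symRel A m).liftQ (B2 m φ) (B2_ker₁ m φ)

lemma opMap_mk (φ : A →ₗ[ℂ] W →ₗ[ℂ] W) (a : Fin m → A) (w : Fin m → W) :
    opMap m φ (symMk A m a) (symMk W m w) =
      (m.factorial : ℂ)⁻¹ • ∑ σ : Equiv.Perm (Fin m),
        symMk W m (fun i => φ (a i) (w (σ⁻¹ i))) := by
  rw [symMk, symMk, opMap]
  rw [show (symRel A m).mkQ ((PiTensorProduct.tprod ℂ) a) = Submodule.Quotient.mk ((PiTensorProduct.tprod ℂ) a) from rfl]
  rw [Submodule.liftQ_apply, B2_mk, Bmap_apply]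
  congr 1
  apply Finset.sum_congr rfl
  intro σ _
  rw [reindex_tprod, appT_tprod]
  rfl

lemma span_symMk : Submodule.span ℂ (Set.range (symMk W m)) = ⊤ := by
  have h1 : Set.range (symMk W m) = (symRel W m).mkQ '' Set.range (tprod ℂ) := by
    rw [← Set.range_comp]; rfl
  rw [h1, ← Submodule.map_span, PiTensorProduct.span_tprod_eq_top, Submodule.map_top,
    Submodule.range_mkQ]

end Aux

theorem sympow_end_to_end_sympow (V : Type) [AddCommGroup V] [Module ℂ V]
    [FiniteDimensional ℂ V] (m : ℕ) :
    ∃ mul : SymPow (Module.End ℂ V) m →ₗ[ℂ] SymPow (Module.End ℂ V) m →ₗ[ℂ]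
        SymPow (Module.End ℂ V) m,
      (∀ a b : Fin m → Module.End ℂ V,
        mul (symMk _ m a) (symMk _ m b) =
          (m.factorial : ℂ)⁻¹ •
            ∑ σ : Equiv.Perm (Fin m), symMk _ m (fun i => a i * b (σ⁻¹ i))) ∧
      ∃ act : SymPow (Module.End ℂ V) m →ₗ[ℂ] Module.End ℂ (SymPow V m),
        (∀ (a : Fin m → Module.End ℂ V) (v : Fin m → V),
          act (symMk _ m a) (symMk V m v) =
            (m.factorial : ℂ)⁻¹ •
              ∑ σ : Equiv.Perm (Fin m), symMk V m (fun i => a i (v (σ⁻¹ i)))) ∧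
        (∀ x y : SymPow (Module.End ℂ V) m, act (mul x y) = act x * act y) := by
  classical
  set μ : SymPow (Module.End ℂ V) m →ₗ[ℂ] SymPow (Module.End ℂ V) m →ₗ[ℂ]
      SymPow (Module.End ℂ V) m := opMap m (LinearMap.mul ℂ (Module.End ℂ V)) with hμ
  set α : SymPow (Module.End ℂ V) m →ₗ[ℂ] Module.End ℂ (SymPow V m) :=
    opMap m (LinearMap.id : Module.End ℂ V →ₗ[ℂ] V →ₗ[ℂ] V) with hα
  have hμmk : ∀ a b : Fin m → Module.End ℂ V,
      μ (symMk _ m a) (symMk _ m b) =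
        (m.factorial : ℂ)⁻¹ •
          ∑ σ : Equiv.Perm (Fin m), symMk _ m (fun i => a i * b (σ⁻¹ i)) := by
    intro a b
    rw [hμ, opMap_mk]
    simp [LinearMap.mul_apply']
  have hαmk : ∀ (a : Fin m → Module.End ℂ V) (v : Fin m → V),
      α (symMk _ m a) (symMk V m v) =
        (m.factorial : ℂ)⁻¹ •
          ∑ σ : Equiv.Perm (Fin m), symMk V m (fun i => a i (v (σ⁻¹ i))) := by
    intro a v
    rw [hα, opMap_mk]
    rfl
  refine ⟨μ, hμmk, α, hαmk, ?_⟩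
  have key : μ.compr₂ α =
      ((LinearMap.llcomp ℂ (SymPow V m) (SymPow V m) (SymPow V m)).compl₂ α).comp α := by
    apply LinearMap.ext_on (span_symMk m (W := Module.End ℂ V))
    rintro _ ⟨a, rfl⟩
    apply LinearMap.ext_on (span_symMk m (W := Module.End ℂ V))
    rintro _ ⟨b, rfl⟩
    apply LinearMap.ext_on (span_symMk m (W := V))
    rintro _ ⟨v, rfl⟩
    simp only [LinearMap.compr₂_apply, LinearMap.compl₂_apply, LinearMap.comp_apply,
      LinearMap.llcomp_apply]
    rw [hμmk a b, map_smul, map_sum, LinearMap.smul_apply, LinearMap.sum_apply,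
      hαmk b v, map_smul, map_sum]
    simp only [hαmk, LinearMap.smul_apply, LinearMap.sum_apply]
    simp only [Finset.smul_sum, Module.End.mul_apply]
    conv_rhs => rw [Finset.sum_comm]
    refine Finset.sum_congr rfl (fun σ _ => ?_)
    refine Fintype.sum_equiv (Equiv.mulLeft σ⁻¹) _ _ (fun ρ => ?_)
    simp only [Equiv.coe_mulLeft]
    have hi : ∀ i, (σ⁻¹ * ρ)⁻¹ (σ⁻¹ i) = ρ⁻¹ i := by
      intro i
      simp [mul_inv_rev, Equiv.Perm.mul_apply, Equiv.Perm.inv_def, Equiv.apply_symm_apply]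
    simp only [hi]
  intro x y
  have := LinearMap.congr_fun (LinearMap.congr_fun key x) y
  simp only [LinearMap.compr₂_apply, LinearMap.compl₂_apply, LinearMap.comp_apply,
    LinearMap.llcomp_apply] at this
  rw [this, Module.End.mul_eq_comp]
  rfl
end
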